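/- arXiv:math/0509240 — 2 statements merged into one kernel-verified Lean document; each statement's English description precedes it below -/
import Mathlib

section
/- Let n ≥ 1 and let k_1, …, k_n ≥ 1 be integers. The equation n − 1 − t = Σ_{l=1}^n 1/(1 + t + ⋯ + t^{k_l}) has exactly one solution t in [0, ∞) if and only if the star-shaped graph Γ with branch lengths k_1, …, k_n is an extended Dynkin graph D̃_4, Ẽ_6, Ẽ_7 or Ẽ_8, i.e. if and only if n = 4 with k_1 = k_2 = k_3 = k_4 = 1, or n = 3 and the multiset {k_1, k_2, k_3} equals {2, 2, 2}, {1, 3, 3}, or {1, 2, 5}; moreover in this case the unique solution is t = 1. -/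
open Finset

lemma S_pos (k : ℕ) (t : ℝ) (ht : 0 ≤ t) : 0 < ∑ i ∈ range (k+1), t^i := by
  apply Finset.sum_pos'
  · intro i _; positivity
  · exact ⟨0, by simp⟩

lemma pair_le (t : ℝ) (ht : 0 ≤ t) (p q : ℕ) : t^p + t^q ≤ 1 + t^(p+q) := by
  have hpq : t^(p+q) = t^p * t^q := pow_add t p q
  rcases le_total t 1 with h | h
  · have h1 : t^p ≤ 1 := pow_le_one₀ ht h
    have h2 : t^q ≤ 1 := pow_le_one₀ ht h
    nlinarith
  · have h1 : 1 ≤ t^p := one_le_pow₀ h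
    have h2 : 1 ≤ t^q := one_le_pow₀ h
    nlinarith

lemma pair_lt (t : ℝ) (ht : 0 ≤ t) (hne : t ≠ 1) (q : ℕ) (hq : 1 ≤ q) :
    t + t^q < 1 + t^(q+1) := by
  have hpq : t^(q+1) = t * t^q := by ring
  rcases lt_or_gt_of_ne hne with h | h
  · have h1 : t^q < 1 := pow_lt_one₀ ht h (by omega)
    nlinarith
  · have h1 : 1 < t^q := one_lt_pow₀ h (by omega)
    nlinarith

lemma key (k : ℕ) (hk : 1 ≤ k) (t : ℝ) (ht : 0 ≤ t) (hne : t ≠ 1) :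
    2 * ∑ i ∈ range (k+1), t^i < k * t^(k+1) + k + 2 := by
  have hS : ∑ i ∈ range (k+1), t^i = (∑ i ∈ range k, t^(i+1)) + 1 := by
    rw [Finset.sum_range_succ']; simp
  have hrefl : ∑ i ∈ range k, t^(k-i) = ∑ i ∈ range k, t^(i+1) := by
    rw [← Finset.sum_range_reflect]
    apply Finset.sum_congr rfl
    intro j hj
    simp only [Finset.mem_range] at hj
    congr 1
    omega
  have hlt : ∑ i ∈ range k, (t^(i+1) + t^(k-i)) < ∑ i ∈ range k, (1 + t^(k+1)) := by
    apply Finset.sum_lt_sum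
    · intro i hi
      simp only [Finset.mem_range] at hi
      have := pair_le t ht (i+1) (k-i)
      have he : (i+1) + (k-i) = k+1 := by omega
      rw [he] at this; exact this
    · refine ⟨0, Finset.mem_range.2 (by omega), ?_⟩
      have := pair_lt t ht hne k hk
      simpa using this
  rw [Finset.sum_add_distrib, hrefl, Finset.sum_const, Finset.card_range] at hlt
  rw [nsmul_eq_mul] at hlt
  rw [hS]
  nlinarith [hlt]

lemma tS (k : ℕ) (t : ℝ) :
    t * ∑ i ∈ range (k+1), t^i = (∑ i ∈ range (k+1), t^i) + t^(k+1) - 1 := by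
  have h1 : ∑ i ∈ range (k+2), t^i = (∑ i ∈ range (k+1), t^(i+1)) + 1 := by
    rw [Finset.sum_range_succ']; simp
  have h2 : ∑ i ∈ range (k+2), t^i = (∑ i ∈ range (k+1), t^i) + t^(k+1) :=
    Finset.sum_range_succ _ _
  have h3 : t * ∑ i ∈ range (k+1), t^i = ∑ i ∈ range (k+1), t^(i+1) := by
    rw [Finset.mul_sum]
    apply Finset.sum_congr rfl
    intro i _; ring
  rw [h3]; linarith

lemma tangent (k : ℕ) (hk : 1 ≤ k) (t : ℝ) (ht : 0 ≤ t) (hne : t ≠ 1) :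
    1/((k:ℝ)+1) * ((t+1)/2) - (t-1)/2 < 1 / ∑ i ∈ range (k+1), t^i := by
  have hS := S_pos k t ht
  have hkey := key k hk t ht hne
  have hts := tS k t
  set S := ∑ i ∈ range (k+1), t^i with hSdef
  have hk1 : (0:ℝ) < (k:ℝ)+1 := by positivity
  have hLHS : 1/((k:ℝ)+1) * ((t+1)/2) - (t-1)/2 = ((k:ℝ)+2-(k:ℝ)*t) / (2*((k:ℝ)+1)) := by
    field_simp
    ring
  rw [hLHS, div_lt_div_iff₀ (by positivity) hS]
  nlinarith [hkey, hts]

lemma master (n : ℕ) (hn : 1 ≤ n) (k : Fin n → ℕ) (hk : ∀ l, 1 ≤ k l)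
    (t : ℝ) (ht : 0 ≤ t) (hne : t ≠ 1) :
    (∑ l : Fin n, 1/((k l : ℝ)+1)) * ((t+1)/2) - n*(t-1)/2
      < ∑ l : Fin n, 1 / ∑ i ∈ range (k l + 1), t^i := by
  have hstep : ∑ l : Fin n, (1/((k l : ℝ)+1) * ((t+1)/2) - (t-1)/2)
      < ∑ l : Fin n, 1 / ∑ i ∈ range (k l + 1), t^i := by
    apply Finset.sum_lt_sum_of_nonempty
    · exact Finset.univ_nonempty_iff.2 (Fin.pos_iff_nonempty.1 (by omega))
    · intro l _
      exact tangent (k l) (hk l) t ht hne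
  calc (∑ l : Fin n, 1/((k l : ℝ)+1)) * ((t+1)/2) - n*(t-1)/2
      = ∑ l : Fin n, (1/((k l : ℝ)+1) * ((t+1)/2) - (t-1)/2) := by
        rw [Finset.sum_sub_distrib, ← Finset.sum_mul, Finset.sum_const, Finset.card_univ,
          Fintype.card_fin, nsmul_eq_mul]
        ring
    _ < _ := hstep

lemma S_one (k : ℕ) : ∑ i ∈ range (k+1), (1:ℝ)^i = (k:ℝ)+1 := by
  simp

lemma contF (n : ℕ) (k : Fin n → ℕ) :
    ContinuousOn (fun t : ℝ => ∑ l : Fin n, 1 / ∑ i ∈ range (k l + 1), t^i) (Set.Ici 0) := by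
  apply continuousOn_finset_sum
  intro l _
  apply ContinuousOn.div continuousOn_const
  · exact Continuous.continuousOn (by continuity)
  · intro x hx
    exact ne_of_gt (S_pos (k l) x hx)

lemma inv_mono (x y : ℕ) (h : x ≤ y) : (1:ℝ)/((y:ℝ)+1) ≤ 1/((x:ℝ)+1) := by
  apply one_div_le_one_div_of_le (by positivity)
  have : (x:ℝ) ≤ (y:ℝ) := by exact_mod_cast h
  linarith

lemma inv_pos' (x : ℕ) : (0:ℝ) < 1/((x:ℝ)+1) := by positivity

lemma inv_eq_nat (x : ℕ) (m : ℕ) (hm : 0 < m) (h : (1:ℝ)/((x:ℝ)+1) = 1/(m:ℝ)) :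
    x + 1 = m := by
  have hx : (0:ℝ) < (x:ℝ)+1 := by positivity
  have hm' : (0:ℝ) < (m:ℝ) := by exact_mod_cast hm
  have : (x:ℝ)+1 = (m:ℝ) := by
    field_simp at h
    linarith
  exact_mod_cast this

lemma triple_sorted (a b c : ℕ) (ha : 1 ≤ a) (hab : a ≤ b) (hbc : b ≤ c)
    (h : (1:ℝ)/((a:ℝ)+1) + 1/((b:ℝ)+1) + 1/((c:ℝ)+1) = 1) :
    (a = 2 ∧ b = 2 ∧ c = 2) ∨ (a = 1 ∧ b = 3 ∧ c = 3) ∨ (a = 1 ∧ b = 2 ∧ c = 5) := by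
  simp only [one_div] at h
  have bnd : ∀ m r : ℕ, m ≤ r → ((r:ℝ)+1)⁻¹ ≤ ((m:ℝ)+1)⁻¹ := by
    intro m r hr
    have := inv_mono m r hr
    simpa [one_div] using this
  have pos : ∀ r : ℕ, (0:ℝ) < ((r:ℝ)+1)⁻¹ := by
    intro r
    have := inv_pos' r
    simpa [one_div] using this
  have ha2 : a ≤ 2 := by
    by_contra hcon
    push_neg at hcon
    have h1 := bnd 3 a (by omega)
    have h2 := bnd 3 b (by omega)
    have h3 := bnd 3 c (by omega)
    norm_num at h1 h2 h3
    linarith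
  have extract : ∀ r : ℕ, ∀ m : ℕ, 0 < m → ((r:ℝ)+1)⁻¹ = (m:ℝ)⁻¹ → r + 1 = m := by
    intro r m hm he
    apply inv_eq_nat r m hm
    simp only [one_div]
    exact he
  interval_cases a
  · -- a = 1
    push_cast at h
    norm_num at h
    have hb3 : b ≤ 3 := by
      by_contra hcon
      push_neg at hcon
      have h2 := bnd 4 b (by omega)
      have h3 := bnd 4 c (by omega)
      norm_num at h2 h3
      linarith
    interval_cases b
    · have := pos c
      push_cast at h
      norm_num at h
      linarith
    · have hc : c + 1 = 6 := by
        apply extract c 6 (by norm_num)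
        push_cast at h
        norm_num at h ⊢
        linarith
      omega
    · have hc : c + 1 = 4 := by
        apply extract c 4 (by norm_num)
        push_cast at h
        norm_num at h ⊢
        linarith
      omega
  · -- a = 2
    push_cast at h
    norm_num at h
    have hb2 : b ≤ 2 := by
      by_contra hcon
      push_neg at hcon
      have h2 := bnd 3 b (by omega)
      have h3 := bnd 3 c (by omega)
      norm_num at h2 h3
      linarith
    interval_cases b
    have hc : c + 1 = 3 := by
      apply extract c 3 (by norm_num)
      push_cast at h
      norm_num at h ⊢
      linarith
    omega

lemma triple (a b c : ℕ) (ha : 1 ≤ a) (hb : 1 ≤ b) (hc : 1 ≤ c)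
    (h : (1:ℝ)/((a:ℝ)+1) + 1/((b:ℝ)+1) + 1/((c:ℝ)+1) = 1) :
    ({a,b,c} : Multiset ℕ) = {2,2,2} ∨ ({a,b,c} : Multiset ℕ) = {1,3,3} ∨
      ({a,b,c} : Multiset ℕ) = {1,2,5} := by
  rcases le_total a b with h1 | h1 <;> rcases le_total b c with h2 | h2 <;>
    rcases le_total a c with h3 | h3
  · rcases triple_sorted a b c ha h1 h2 (by linarith) with ⟨x,y,z⟩|⟨x,y,z⟩|⟨x,y,z⟩ <;>
      subst_vars <;> decide
  · rcases triple_sorted a b c ha h1 h2 (by linarith) with ⟨x,y,z⟩|⟨x,y,z⟩|⟨x,y,z⟩ <;>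
      subst_vars <;> decide
  · rcases triple_sorted a c b ha h3 h2 (by linarith) with ⟨x,y,z⟩|⟨x,y,z⟩|⟨x,y,z⟩ <;>
      subst_vars <;> decide
  · rcases triple_sorted c a b hc h3 h1 (by linarith) with ⟨x,y,z⟩|⟨x,y,z⟩|⟨x,y,z⟩ <;>
      subst_vars <;> decide
  · rcases triple_sorted b a c hb h1 h3 (by linarith) with ⟨x,y,z⟩|⟨x,y,z⟩|⟨x,y,z⟩ <;>
      subst_vars <;> decide
  · rcases triple_sorted b c a hb h2 h3 (by linarith) with ⟨x,y,z⟩|⟨x,y,z⟩|⟨x,y,z⟩ <;>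
      subst_vars <;> decide
  · rcases triple_sorted c b a hc h2 h1 (by linarith) with ⟨x,y,z⟩|⟨x,y,z⟩|⟨x,y,z⟩ <;>
      subst_vars <;> decide
  · rcases triple_sorted c b a hc h2 h1 (by linarith) with ⟨x,y,z⟩|⟨x,y,z⟩|⟨x,y,z⟩ <;>
      subst_vars <;> decide

lemma S_zero (k : ℕ) : ∑ i ∈ range (k+1), (0:ℝ)^i = 1 := by
  rw [Finset.sum_range_succ']
  simp

lemma S_at_one (k : ℕ) : ∑ i ∈ range (k+1), (1:ℝ)^i = (k:ℝ)+1 := by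
  simp

lemma term_le_half (m : ℕ) (hm : 1 ≤ m) : (1:ℝ)/((m:ℝ)+1) ≤ 1/2 := by
  have := inv_mono 1 m hm
  simp only [one_div] at this ⊢
  norm_num at this ⊢
  exact this

lemma term_ge_imp (m : ℕ) (h : (1:ℝ)/2 ≤ 1/((m:ℝ)+1)) : m ≤ 1 := by
  have hpos : (0:ℝ) < (m:ℝ)+1 := by positivity
  rw [div_le_div_iff₀ (by norm_num) hpos] at h
  have : (m:ℝ) ≤ 1 := by linarith
  exact_mod_cast this

/-- Under the Dynkin condition, `∑ 1/(k l + 1) = n - 2`. -/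
lemma sumA (n : ℕ) (k : Fin n → ℕ)
    (hc : (n = 4 ∧ ∀ l, k l = 1) ∨
      (n = 3 ∧
        (Multiset.map k Finset.univ.val = {2, 2, 2} ∨
          Multiset.map k Finset.univ.val = {1, 3, 3} ∨
          Multiset.map k Finset.univ.val = {1, 2, 5}))) :
    ∑ l : Fin n, 1/((k l : ℝ)+1) = (n:ℝ) - 2 := by
  rcases hc with ⟨rfl, hk1⟩ | ⟨rfl, hm⟩
  · simp [hk1]
    norm_num
  · have hsum : ∀ f : ℕ → ℝ,
        ∑ l : Fin 3, f (k l) = ((Multiset.map k Finset.univ.val).map f).sum := by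
      intro f
      rw [Multiset.map_map]
      rfl
    rw [hsum (fun m => 1/((m:ℝ)+1))]
    rcases hm with hm | hm | hm <;> rw [hm] <;> simp <;> norm_num

/-- Existence at t = 1 under the condition. -/
lemma exist_one (n : ℕ) (k : Fin n → ℕ)
    (hA : ∑ l : Fin n, 1/((k l : ℝ)+1) = (n:ℝ) - 2) :
    (n : ℝ) - 1 - 1 = ∑ l : Fin n, 1 / ∑ i ∈ Finset.range (k l + 1), (1:ℝ) ^ i := by
  have : ∑ l : Fin n, 1 / ∑ i ∈ Finset.range (k l + 1), (1:ℝ) ^ i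
      = ∑ l : Fin n, 1/((k l : ℝ)+1) := by
    apply Finset.sum_congr rfl
    intro l _
    rw [S_at_one]
  rw [this, hA]
  ring

/-- Uniqueness under the condition. -/
lemma uniq_one (n : ℕ) (hn : 1 ≤ n) (k : Fin n → ℕ) (hk : ∀ l, 1 ≤ k l)
    (hA : ∑ l : Fin n, 1/((k l : ℝ)+1) = (n:ℝ) - 2)
    (t : ℝ) (ht : 0 ≤ t)
    (he : (n : ℝ) - 1 - t = ∑ l : Fin n, 1 / ∑ i ∈ Finset.range (k l + 1), t ^ i) :
    t = 1 := by
  by_contra hne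
  have hm := master n hn k hk t ht hne
  rw [hA] at hm
  have : ((n:ℝ) - 2) * ((t+1)/2) - n*(t-1)/2 = (n:ℝ) - 1 - t := by ring
  rw [this] at hm
  linarith [hm, he.le, he.ge]

lemma forward_A (n : ℕ) (hn : 1 ≤ n) (k : Fin n → ℕ) (hk : ∀ l, 1 ≤ k l)
    (hEU : ∃! t : ℝ, 0 ≤ t ∧
      (n : ℝ) - 1 - t = ∑ l : Fin n, 1 / ∑ i ∈ Finset.range (k l + 1), t ^ i) :
    ∑ l : Fin n, 1/((k l : ℝ)+1) = (n:ℝ) - 2 := by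
  set A := ∑ l : Fin n, 1/((k l : ℝ)+1) with hAdef
  set F := fun t : ℝ => ∑ l : Fin n, 1 / ∑ i ∈ Finset.range (k l + 1), t ^ i with hFdef
  have hF1 : F 1 = A := by
    apply Finset.sum_congr rfl
    intro l _
    rw [S_at_one]
  have hF0 : F 0 = (n:ℝ) := by
    have : F 0 = ∑ l : Fin n, (1:ℝ) := by
      apply Finset.sum_congr rfl
      intro l _
      rw [S_zero]
      norm_num
    rw [this]
    simp
  have hFpos : ∀ t : ℝ, 0 ≤ t → 0 ≤ F t := by
    intro t ht
    apply Finset.sum_nonneg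
    intro l _
    positivity
  rcases lt_trichotomy A ((n:ℝ) - 2) with hlt | heq | hgt
  · -- A < n - 2 : two distinct roots, contradiction
    exfalso
    obtain ⟨t₀, _, huniq⟩ := hEU
    set G := fun t : ℝ => ((n:ℝ) - 1 - t) - F t with hGdef
    have hGcont : ContinuousOn G (Set.Ici 0) := by
      apply ContinuousOn.sub
      · exact ((continuous_const.sub continuous_id)).continuousOn
      · exact contF n k
    have hG0 : G 0 = -1 := by simp [hGdef, hF0]
    have hG1 : 0 < G 1 := by
      simp only [hGdef, hF1]
      linarith
    have hGn : G (n:ℝ) < 0 := by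
      simp only [hGdef]
      have := hFpos (n:ℝ) (by positivity)
      linarith
    have hn1 : (1:ℝ) ≤ (n:ℝ) := by exact_mod_cast hn
    -- root in [0,1]
    have hsub1 : Set.Icc (0:ℝ) 1 ⊆ Set.Ici 0 := fun x hx => hx.1
    have hiv1 := intermediate_value_Icc (by norm_num : (0:ℝ) ≤ 1) (hGcont.mono hsub1)
    have h01 : (0:ℝ) ∈ Set.Icc (G 0) (G 1) := ⟨by rw [hG0]; norm_num, le_of_lt hG1⟩
    obtain ⟨t₁, ht₁mem, ht₁⟩ := hiv1 h01
    -- root in [1, n]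
    have hsub2 : Set.Icc (1:ℝ) (n:ℝ) ⊆ Set.Ici 0 := fun x hx => le_trans (by norm_num) hx.1
    have hiv2 := intermediate_value_Icc' hn1 (hGcont.mono hsub2)
    have h02 : (0:ℝ) ∈ Set.Icc (G (n:ℝ)) (G 1) := ⟨le_of_lt hGn, le_of_lt hG1⟩
    obtain ⟨t₂, ht₂mem, ht₂⟩ := hiv2 h02
    have e₁ : t₁ = t₀ := huniq t₁ ⟨ht₁mem.1, by simp only [hGdef] at ht₁; linarith⟩
    have e₂ : t₂ = t₀ := huniq t₂ ⟨le_trans (by norm_num) ht₂mem.1, by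
      simp only [hGdef] at ht₂; linarith⟩
    have ht12 : t₁ = t₂ := by rw [e₁, e₂]
    have : t₁ = 1 := le_antisymm ht₁mem.2 (by rw [ht12]; exact ht₂mem.1)
    rw [this] at ht₁
    linarith
  · exact heq
  · -- A > n - 2 : no root at all
    exfalso
    obtain ⟨t₀, ⟨ht₀, he⟩, _⟩ := hEU
    by_cases h1 : t₀ = 1
    · rw [h1] at he
      rw [show ∑ l : Fin n, 1 / ∑ i ∈ Finset.range (k l + 1), (1:ℝ) ^ i = F 1 from rfl,
        hF1] at he
      linarith
    · have hm := master n hn k hk t₀ ht₀ h1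
      have hgap : (n:ℝ) - 1 - t₀ < A * ((t₀+1)/2) - n*(t₀-1)/2 := by
        nlinarith [mul_pos (by linarith : (0:ℝ) < A - ((n:ℝ)-2)) (by linarith : (0:ℝ) < t₀ + 1)]
      rw [← hAdef] at hm
      linarith [he.le, he.ge]

lemma forward_comb (n : ℕ) (hn : 1 ≤ n) (k : Fin n → ℕ) (hk : ∀ l, 1 ≤ k l)
    (hA : ∑ l : Fin n, 1/((k l : ℝ)+1) = (n:ℝ) - 2) :
    (n = 4 ∧ ∀ l, k l = 1) ∨
      (n = 3 ∧
        (Multiset.map k Finset.univ.val = {2, 2, 2} ∨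
          Multiset.map k Finset.univ.val = {1, 3, 3} ∨
          Multiset.map k Finset.univ.val = {1, 2, 5})) := by
  have hne : (Finset.univ : Finset (Fin n)).Nonempty :=
    Finset.univ_nonempty_iff.2 (Fin.pos_iff_nonempty.1 (by omega))
  have hle : ∀ l : Fin n, 1/((k l : ℝ)+1) ≤ 1/2 := fun l => term_le_half (k l) (hk l)
  have hub : ∑ l : Fin n, 1/((k l : ℝ)+1) ≤ (n:ℝ) * (1/2) := by
    calc ∑ l : Fin n, 1/((k l : ℝ)+1) ≤ ∑ l : Fin n, (1:ℝ)/2 :=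
          Finset.sum_le_sum (fun l _ => hle l)
      _ = (n:ℝ) * (1/2) := by
          rw [Finset.sum_const, Finset.card_univ, Fintype.card_fin, nsmul_eq_mul]
  have hpos : 0 < ∑ l : Fin n, 1/((k l : ℝ)+1) :=
    Finset.sum_pos (fun l _ => inv_pos' (k l)) hne
  have hn4 : n ≤ 4 := by
    have : (n:ℝ) ≤ 4 := by linarith [hA ▸ hub]
    exact_mod_cast this
  have hn3 : 3 ≤ n := by
    have : (2:ℝ) < (n:ℝ) := by linarith [hA ▸ hpos]
    have : (2:ℕ) < n := by exact_mod_cast this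
    omega
  interval_cases n
  · -- n = 3
    right
    refine ⟨rfl, ?_⟩
    rw [Fin.sum_univ_three] at hA
    push_cast at hA
    have hA' : 1/((k 0:ℝ)+1) + 1/((k 1:ℝ)+1) + 1/((k 2:ℝ)+1) = 1 := by linarith
    have htri := triple (k 0) (k 1) (k 2) (hk 0) (hk 1) (hk 2) hA'
    have hmap : Multiset.map k Finset.univ.val = {k 0, k 1, k 2} := rfl
    rw [hmap]
    exact htri
  · -- n = 4
    left
    refine ⟨rfl, ?_⟩
    rw [Fin.sum_univ_four] at hA
    push_cast at hA
    have hone : ∀ m : ℕ, 1 ≤ m → (1:ℝ)/2 ≤ 1/((m:ℝ)+1) → m = 1 := by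
      intro m hm1 hm2
      have := term_ge_imp m hm2
      omega
    have e0 : k 0 = 1 := hone (k 0) (hk 0) (by linarith [hle 1, hle 2, hle 3])
    have e1 : k 1 = 1 := hone (k 1) (hk 1) (by linarith [hle 0, hle 2, hle 3])
    have e2 : k 2 = 1 := hone (k 2) (hk 2) (by linarith [hle 0, hle 1, hle 3])
    have e3 : k 3 = 1 := hone (k 3) (hk 3) (by linarith [hle 0, hle 1, hle 2])
    intro l
    fin_cases l
    · exact e0
    · exact e1
    · exact e2
    · exact e3


/-- The equation `n − 1 − t = Σ_{l=1}^n 1/(1 + t + ⋯ + t^{k_l})` has exactly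
one solution `t ∈ [0, ∞)` iff the star-shaped graph with branch lengths `k_1, …, k_n` is an
extended Dynkin graph `D̃₄`, `Ẽ₆`, `Ẽ₇` or `Ẽ₈`, i.e. iff `n = 4` with all branch lengths
`1`, or `n = 3` with branch-length multiset `{2,2,2}`, `{1,3,3}` or `{1,2,5}`; moreover in
this case the unique solution is `t = 1`. -/
theorem stmt_1 (n : ℕ) (hn : 1 ≤ n) (k : Fin n → ℕ) (hk : ∀ l, 1 ≤ k l) :
    ((∃! t : ℝ, 0 ≤ t ∧
        (n : ℝ) - 1 - t = ∑ l : Fin n, 1 / ∑ i ∈ Finset.range (k l + 1), t ^ i) ↔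
      ((n = 4 ∧ ∀ l, k l = 1) ∨
        (n = 3 ∧
          (Multiset.map k Finset.univ.val = {2, 2, 2} ∨
            Multiset.map k Finset.univ.val = {1, 3, 3} ∨
            Multiset.map k Finset.univ.val = {1, 2, 5})))) ∧
    (((n = 4 ∧ ∀ l, k l = 1) ∨
        (n = 3 ∧
          (Multiset.map k Finset.univ.val = {2, 2, 2} ∨
            Multiset.map k Finset.univ.val = {1, 3, 3} ∨
            Multiset.map k Finset.univ.val = {1, 2, 5}))) →
      ((n : ℝ) - 1 - 1 = ∑ l : Fin n, 1 / ∑ i ∈ Finset.range (k l + 1), (1 : ℝ) ^ i) ∧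
        ∀ t : ℝ, 0 ≤ t →
          (n : ℝ) - 1 - t = (∑ l : Fin n, 1 / ∑ i ∈ Finset.range (k l + 1), t ^ i) →
          t = 1) := by
  constructor
  · constructor
    · intro hEU
      exact forward_comb n hn k hk (forward_A n hn k hk hEU)
    · intro hc
      have hA := sumA n k hc
      refine ⟨1, ⟨zero_le_one, exist_one n k hA⟩, ?_⟩
      rintro t ⟨ht, he⟩
      exact uniq_one n hn k hk hA t ht he
  · intro hc
    have hA := sumA n k hc
    exact ⟨exist_one n k hA, fun t ht he => uniq_one n hn k hk hA t ht he⟩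
end

section
/- Let n ≥ 1 and let k_1, …, k_n ≥ 1 be integers such that the star-shaped graph Γ with branch lengths k_1, …, k_n is neither a Dynkin graph nor an extended Dynkin graph (i.e. it is not the case that n ≤ 2, nor that n = 3 with branch-length multiset {1,1,m} (m ≥ 1), {1,2,2}, {1,2,3} or {1,2,4}, nor that n = 4 with all branch lengths 1, nor that n = 3 with branch-length multiset {2,2,2}, {1,3,3} or {1,2,5}). Then the two solutions t_1 < t_2 of the equation n − 1 − t = Σ_{l=1}^n 1/(1 + t + ⋯ + t^{k_l}) in [0, ∞) satisfy t_1 · t_2 = 1. -/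
/-!
The substitution `t ↦ t⁻¹` maps solutions to solutions, because
`1 / (1 + t⁻¹ + ⋯ + t⁻ᵏ) = 1 - t⁻¹ + t⁻¹ / (1 + t + ⋯ + tᵏ)`. For `t > 1` the equation can be
rewritten as `∑ₗ 1 / (t^(kₗ+1) - 1) - (n - 2) / (t - 1) = -1`. Chebyshev's sum inequality shows
that each `1 / (t^(k+1) - 1) - 1 / ((k + 1)(t - 1))` is monotone on `(1, ∞)`, so the left-hand side
is strictly increasing there as soon as `∑ₗ 1 / (kₗ + 1) < n - 2`. For star graphs, this
inequality says exactly that the graph is neither Dynkin nor extended Dynkin. Since `0` and `1`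
are not solutions, there is a unique solution greater than `1`, and the solutions in `[0, ∞)` are
therefore `t₁ < 1 < t₂ = t₁⁻¹`.
-/

open Finset

section GeomSum

variable {K : Type*} [Field K]

lemma pow_mul_geom_sum_inv {t : K} (ht : t ≠ 0) (k : ℕ) :
    t ^ k * ∑ i ∈ range (k + 1), t⁻¹ ^ i = ∑ i ∈ range (k + 1), t ^ i := by
  induction k with
  | zero => simp
  | succ k ih =>
    rw [geom_sum_succ, sum_range_succ _ (k + 1), ← ih]
    field_simp
    ring

lemma one_div_geom_sum_inv {t : K} (ht : t ≠ 0) {k : ℕ}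
    (hS : ∑ i ∈ range (k + 1), t ^ i ≠ 0) :
    1 / ∑ i ∈ range (k + 1), t⁻¹ ^ i = 1 - t⁻¹ + t⁻¹ * (1 / ∑ i ∈ range (k + 1), t ^ i) := by
  have hS' : ∑ i ∈ range (k + 1), t⁻¹ ^ i = (∑ i ∈ range (k + 1), t ^ i) / t ^ k := by
    rw [← pow_mul_geom_sum_inv ht k]
    field_simp
  rw [hS']
  field_simp
  linear_combination -mul_geom_sum t (k + 1)

end GeomSum

lemma card_mul_geom_sum₂_le_geom_sum_mul_geom_sum {R : Type*} [CommSemiring R] [LinearOrder R]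
    [IsStrictOrderedRing R] [ExistsAddOfLE R] {a b : R} (ha : 1 ≤ a) (hb : 1 ≤ b) (m : ℕ) :
    m * ∑ i ∈ range m, b ^ i * a ^ (m - 1 - i)
      ≤ (∑ i ∈ range m, b ^ i) * ∑ i ∈ range m, a ^ i := by
  have hanti : AntivaryOn (fun i ↦ b ^ i) (fun i ↦ a ^ (m - 1 - i)) (range m : Set ℕ) := by
    intro i hi j hj hlt
    simp only [coe_range, Set.mem_Iio] at hi hj
    have hji : j < i := by
      by_contra! hij
      exact hlt.not_ge (pow_le_pow_right₀ ha (by omega))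
    exact pow_le_pow_right₀ hb hji.le
  simpa [sum_range_reflect (fun i ↦ a ^ i) m] using hanti.card_mul_sum_le_sum_mul_sum

lemma monotoneOn_one_div_pow_sub_one_sub (k : ℕ) :
    MonotoneOn (fun t : ℝ ↦ 1 / (t ^ (k + 1) - 1) - 1 / ((k + 1) * (t - 1))) (Set.Ioi 1) := by
  intro a ha b hb hab
  simp only [Set.mem_Ioi] at ha hb
  set A := ∑ i ∈ range (k + 1), a ^ i
  set B := ∑ i ∈ range (k + 1), b ^ i
  have hA : 0 < A := geom_sum_pos (by linarith) k.succ_ne_zero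
  have hB : 0 < B := geom_sum_pos (by linarith) k.succ_ne_zero
  have key : (k + 1) * ((b - 1) * B - (a - 1) * A) ≤ (b - a) * (A * B) := by
    have hcheb := card_mul_geom_sum₂_le_geom_sum_mul_geom_sum ha.le hb.le (k + 1)
    push_cast at hcheb
    -- `(b - 1) B - (a - 1) A = b ^ (k + 1) - a ^ (k + 1) = (b - a) ∑ bⁱ a^(k - i)`
    calc (k + 1) * ((b - 1) * B - (a - 1) * A)
        = (b - a) * ((k + 1) * ∑ i ∈ range (k + 1), b ^ i * a ^ (k + 1 - 1 - i)) := by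
          linear_combination (k + 1 : ℝ) * (mul_geom_sum b (k + 1) - mul_geom_sum a (k + 1)
            - geom_sum₂_mul b a (k + 1))
      _ ≤ (b - a) * (B * A) := mul_le_mul_of_nonneg_left hcheb (by linarith)
      _ = (b - a) * (A * B) := by ring
  dsimp only
  rw [← mul_geom_sum a, ← mul_geom_sum b, sub_le_sub_iff,
    div_add_div _ _ (by positivity) (by positivity),
    div_add_div _ _ (by positivity) (by positivity), div_le_div_iff₀ (by positivity) (by positivity)]
  linear_combination ((k + 1) * (a - 1) * (b - 1)) * key

lemma strictMonoOn_sum_one_div_pow_sub_one_sub {n : ℕ} (k : Fin n → ℕ)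
    (hδ : ∑ l, 1 / ((k l : ℝ) + 1) < n - 2) :
    StrictMonoOn (fun t : ℝ ↦ ∑ l, 1 / (t ^ (k l + 1) - 1) - (n - 2) / (t - 1)) (Set.Ioi 1) := by
  have hsplit : ∀ t : ℝ, ∑ l, 1 / (t ^ (k l + 1) - 1) - (n - 2) / (t - 1)
      = ∑ l, (1 / (t ^ (k l + 1) - 1) - 1 / ((k l + 1) * (t - 1)))
        - (n - 2 - ∑ l, 1 / ((k l : ℝ) + 1)) / (t - 1) := by
    intro t
    simp only [sum_sub_distrib, sub_div, sum_div, div_div]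
    ring
  intro a ha b hb hab
  simp only [Set.mem_Ioi] at ha hb
  simp only [hsplit]
  have hbranches := sum_le_sum fun l (_ : l ∈ univ) ↦
    monotoneOn_one_div_pow_sub_one_sub (k l) ha hb hab.le
  have hpole : (n - 2 - ∑ l, 1 / ((k l : ℝ) + 1)) / (b - 1)
      < (n - 2 - ∑ l, 1 / ((k l : ℝ) + 1)) / (a - 1) :=
    div_lt_div_of_pos_left (by linarith) (by linarith) (by linarith)
  linarith

def IsStarRoot {n : ℕ} (k : Fin n → ℕ) (t : ℝ) : Prop :=
  (n : ℝ) - 1 - t = ∑ l : Fin n, 1 / ∑ i ∈ range (k l + 1), t ^ i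

section

variable {n : ℕ} {k : Fin n → ℕ}

lemma not_isStarRoot_zero : ¬ IsStarRoot k 0 := by
  simp [IsStarRoot]

lemma not_isStarRoot_one (hδ : ∑ l, 1 / ((k l : ℝ) + 1) < n - 2) : ¬ IsStarRoot k 1 := by
  intro h
  simp only [IsStarRoot, one_geom_sum] at h
  push_cast at h
  linarith

namespace IsStarRoot

lemma inv {t : ℝ} (ht : 0 < t) (h : IsStarRoot k t) : IsStarRoot k t⁻¹ := by
  unfold IsStarRoot at h ⊢
  rw [sum_congr rfl fun l _ ↦
      one_div_geom_sum_inv ht.ne' (geom_sum_pos ht.le (k l).succ_ne_zero).ne',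
    sum_add_distrib, sum_sub_distrib, ← mul_sum, ← h]
  simp only [sum_const, card_univ, Fintype.card_fin, nsmul_eq_mul, mul_one]
  field_simp
  ring

lemma sum_one_div_pow_sub_one_sub_eq {t : ℝ} (h : IsStarRoot k t) (ht : 1 < t) :
    ∑ l, 1 / (t ^ (k l + 1) - 1) - (n - 2) / (t - 1) = -1 := by
  have hbranch : ∀ l, 1 / (t ^ (k l + 1) - 1) = (1 / ∑ i ∈ range (k l + 1), t ^ i) / (t - 1) := by
    intro l
    rw [← mul_geom_sum, div_div, mul_comm]
  have ht1 : t - 1 ≠ 0 := by linarith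
  unfold IsStarRoot at h
  simp only [hbranch, ← sum_div, ← h]
  field_simp
  ring

lemma eq_of_one_lt (hδ : ∑ l, 1 / ((k l : ℝ) + 1) < n - 2)
    {a b : ℝ} (ha : 1 < a) (hb : 1 < b) (h_a : IsStarRoot k a) (h_b : IsStarRoot k b) : a = b :=
  (strictMonoOn_sum_one_div_pow_sub_one_sub k hδ).injOn ha hb
    ((h_a.sum_one_div_pow_sub_one_sub_eq ha).trans (h_b.sum_one_div_pow_sub_one_sub_eq hb).symm)

theorem mul_eq_one (hδ : ∑ l, 1 / ((k l : ℝ) + 1) < n - 2)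
    {a b : ℝ} (ha : 0 ≤ a) (hab : a < b) (h_a : IsStarRoot k a) (h_b : IsStarRoot k b) :
    a * b = 1 := by
  have ha0 : 0 < a := ha.lt_of_ne fun h ↦ not_isStarRoot_zero (h ▸ h_a)
  have hb0 : 0 < b := ha0.trans hab
  have hb1 : 1 < b := by
    rcases lt_trichotomy b 1 with hb1 | rfl | hb1
    · have := (h_b.inv hb0).eq_of_one_lt hδ ((one_lt_inv₀ hb0).2 hb1)
        ((one_lt_inv₀ ha0).2 (hab.trans hb1)) (h_a.inv ha0)
      exact absurd (inv_injective this) hab.ne'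
    · exact absurd h_b (not_isStarRoot_one hδ)
    · exact hb1
  have ha1 : a < 1 := by
    rcases lt_trichotomy a 1 with ha1 | rfl | ha1
    · exact ha1
    · exact absurd h_a (not_isStarRoot_one hδ)
    · exact absurd (h_a.eq_of_one_lt hδ ha1 hb1 h_b) hab.ne
  rw [← (h_a.inv ha0).eq_of_one_lt hδ ((one_lt_inv₀ ha0).2 ha1) hb1 h_b, mul_inv_cancel₀ ha0.ne']

end IsStarRoot

end

lemma le_five_or_eq_one_of_mul_mul_le {p q r : ℕ} (hp : 1 ≤ p) (hq : 1 ≤ q) (hr : 1 ≤ r)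
    (h : p * q * r ≤ p + q + r + 2) : p ≤ 5 ∨ q = 1 ∧ r = 1 := by
  by_contra! hc
  obtain ⟨hp6, hqr⟩ := hc
  rcases (by omega : 2 ≤ q ∨ 2 ≤ r) with hq2 | hr2
  · nlinarith [Nat.mul_le_mul hp6 hq2]
  · nlinarith [Nat.mul_le_mul hp6 hr2]

-- `p q r ≤ p + q + r + 2` is `1 / (p + 1) + 1 / (q + 1) + 1 / (r + 1) ≥ 1`, denominators cleared.
lemma dynkin_or_extended_dynkin_of_mul_mul_le {p q r : ℕ} (hp : 1 ≤ p) (hq : 1 ≤ q) (hr : 1 ≤ r)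
    (h : p * q * r ≤ p + q + r + 2) :
    ((∃ m, 1 ≤ m ∧ ({p, q, r} : Multiset ℕ) = {1, 1, m}) ∨
        ({p, q, r} : Multiset ℕ) = {1, 2, 2} ∨ ({p, q, r} : Multiset ℕ) = {1, 2, 3} ∨
        ({p, q, r} : Multiset ℕ) = {1, 2, 4}) ∨
      (({p, q, r} : Multiset ℕ) = {2, 2, 2} ∨ ({p, q, r} : Multiset ℕ) = {1, 3, 3} ∨
        ({p, q, r} : Multiset ℕ) = {1, 2, 5}) := by
  by_cases hqr : q = 1 ∧ r = 1
  · obtain ⟨rfl, rfl⟩ := hqr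
    refine Or.inl (Or.inl ⟨p, hp, ?_⟩)
    show p ::ₘ 1 ::ₘ 1 ::ₘ 0 = 1 ::ₘ 1 ::ₘ p ::ₘ 0
    rw [Multiset.cons_swap p, Multiset.cons_swap p]
  by_cases hpr : p = 1 ∧ r = 1
  · obtain ⟨rfl, rfl⟩ := hpr
    refine Or.inl (Or.inl ⟨q, hq, ?_⟩)
    show 1 ::ₘ q ::ₘ 1 ::ₘ 0 = 1 ::ₘ 1 ::ₘ q ::ₘ 0
    rw [Multiset.cons_swap q]
  by_cases hpq : p = 1 ∧ q = 1
  · obtain ⟨rfl, rfl⟩ := hpq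
    exact Or.inl (Or.inl ⟨r, hr, rfl⟩)
  have hp5 := (le_five_or_eq_one_of_mul_mul_le hp hq hr h).resolve_right hqr
  have hq5 := (le_five_or_eq_one_of_mul_mul_le hq hp hr
    (by linarith [mul_comm p q])).resolve_right hpr
  have hr5 := (le_five_or_eq_one_of_mul_mul_le hr hp hq
    (by nlinarith [mul_comm p q])).resolve_right hpq
  have hfinite : ∀ p ∈ Icc 1 5, ∀ q ∈ Icc 1 5, ∀ r ∈ Icc 1 5, p * q * r ≤ p + q + r + 2 →
      ¬ (q = 1 ∧ r = 1) → ¬ (p = 1 ∧ r = 1) → ¬ (p = 1 ∧ q = 1) →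
      (({p, q, r} : Multiset ℕ) = {1, 2, 2} ∨ ({p, q, r} : Multiset ℕ) = {1, 2, 3} ∨
        ({p, q, r} : Multiset ℕ) = {1, 2, 4}) ∨
      (({p, q, r} : Multiset ℕ) = {2, 2, 2} ∨ ({p, q, r} : Multiset ℕ) = {1, 3, 3} ∨
        ({p, q, r} : Multiset ℕ) = {1, 2, 5}) := by
    decide
  rcases hfinite p (mem_Icc.2 ⟨hp, hp5⟩) q (mem_Icc.2 ⟨hq, hq5⟩) r (mem_Icc.2 ⟨hr, hr5⟩)
    h hqr hpr hpq with hD | hE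
  · exact Or.inl (Or.inr hD)
  · exact Or.inr hE

lemma one_div_add_one_div_add_one_div_lt_one {p q r : ℕ} (h : p + q + r + 2 < p * q * r) :
    1 / ((p : ℝ) + 1) + 1 / ((q : ℝ) + 1) + 1 / ((r : ℝ) + 1) < 1 := by
  have h' : (p : ℝ) + q + r + 2 < p * q * r := by exact_mod_cast h
  rw [div_add_div _ _ (by positivity) (by positivity),
    div_add_div _ _ (by positivity) (by positivity), div_lt_one (by positivity)]
  linear_combination h'

lemma dynkin_or_extended_dynkin_of_one_le_sum {k : Fin 3 → ℕ} (hk : ∀ l, 1 ≤ k l)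
    (h : 1 ≤ ∑ l, 1 / ((k l : ℝ) + 1)) :
    ((∃ m, 1 ≤ m ∧ Multiset.map k univ.val = {1, 1, m}) ∨
        Multiset.map k univ.val = {1, 2, 2} ∨ Multiset.map k univ.val = {1, 2, 3} ∨
        Multiset.map k univ.val = {1, 2, 4}) ∨
      (Multiset.map k univ.val = {2, 2, 2} ∨ Multiset.map k univ.val = {1, 3, 3} ∨
        Multiset.map k univ.val = {1, 2, 5}) := by
  have hmap : Multiset.map k univ.val = {k 0, k 1, k 2} := rfl
  rw [hmap]
  refine dynkin_or_extended_dynkin_of_mul_mul_le (hk 0) (hk 1) (hk 2) (not_lt.1 fun hlt ↦ ?_)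
  rw [Fin.sum_univ_three] at h
  linarith [one_div_add_one_div_add_one_div_lt_one hlt]

lemma sum_one_div_succ_lt_of_four_le {n : ℕ} {k : Fin n → ℕ} (hk : ∀ l, 1 ≤ k l) (hn : 4 ≤ n)
    (hD : ¬ (n = 4 ∧ ∀ l, k l = 1)) : ∑ l, 1 / ((k l : ℝ) + 1) < n - 2 := by
  have hhalf : ∀ l, 1 / ((k l : ℝ) + 1) ≤ 1 / 2 := fun l ↦
    one_div_le_one_div_of_le two_pos (by have := hk l; norm_cast; omega)
  have hsum_half : ∑ _l : Fin n, (1 / 2 : ℝ) = n / 2 := by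
    simp only [sum_const, card_univ, Fintype.card_fin, nsmul_eq_mul]
    ring
  by_cases hall : ∀ l, k l = 1
  · have hn4 : n ≠ 4 := fun h4 ↦ hD ⟨h4, hall⟩
    have h5 : (5 : ℝ) ≤ n := by exact_mod_cast (by omega : 5 ≤ n)
    linarith [sum_le_sum fun l (_ : l ∈ univ) ↦ hhalf l]
  · obtain ⟨j, hj⟩ := not_forall.1 hall
    have hlt := sum_lt_sum (fun l (_ : l ∈ univ) ↦ hhalf l) ⟨j, mem_univ j,
      one_div_lt_one_div_of_lt two_pos (by have := hk j; norm_cast; omega)⟩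
    have h4 : (4 : ℝ) ≤ n := by exact_mod_cast hn
    linarith

theorem stmt_4_general (n : ℕ) (k : Fin n → ℕ) (hk : ∀ l, 1 ≤ k l)
    (hnotDynkin : ¬ (n ≤ 2 ∨
      (n = 3 ∧
        ((∃ m : ℕ, 1 ≤ m ∧ Multiset.map k Finset.univ.val = {1, 1, m}) ∨
          Multiset.map k Finset.univ.val = {1, 2, 2} ∨
          Multiset.map k Finset.univ.val = {1, 2, 3} ∨
          Multiset.map k Finset.univ.val = {1, 2, 4}))))
    (hnotExtDynkin : ¬ ((n = 4 ∧ ∀ l, k l = 1) ∨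
      (n = 3 ∧
        (Multiset.map k Finset.univ.val = {2, 2, 2} ∨
          Multiset.map k Finset.univ.val = {1, 3, 3} ∨
          Multiset.map k Finset.univ.val = {1, 2, 5}))))
    (t₁ t₂ : ℝ) (ht₁ : 0 ≤ t₁) (h₁₂ : t₁ < t₂)
    (heq₁ : (n : ℝ) - 1 - t₁ = ∑ l : Fin n, 1 / ∑ i ∈ Finset.range (k l + 1), t₁ ^ i)
    (heq₂ : (n : ℝ) - 1 - t₂ = ∑ l : Fin n, 1 / ∑ i ∈ Finset.range (k l + 1), t₂ ^ i) :
    t₁ * t₂ = 1 := by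
  refine IsStarRoot.mul_eq_one ?_ ht₁ h₁₂ heq₁ heq₂
  rcases (by omega : n ≤ 2 ∨ n = 3 ∨ 4 ≤ n) with hn | rfl | hn
  · exact absurd (Or.inl hn) hnotDynkin
  · by_contra hδ
    rcases dynkin_or_extended_dynkin_of_one_le_sum hk (by push_cast at hδ; linarith) with hD | hE
    · exact hnotDynkin (Or.inr ⟨rfl, hD⟩)
    · exact hnotExtDynkin (Or.inr ⟨rfl, hE⟩)
  · exact sum_one_div_succ_lt_of_four_le hk hn fun h ↦ hnotExtDynkin (Or.inl h)

/-- If the star-shaped graph with branch lengths `k_1, …, k_n` is neither a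
Dynkin graph nor an extended Dynkin graph, then the two solutions `t₁ < t₂` of the equation
`n − 1 − t = Σ_{l=1}^n 1/(1 + t + ⋯ + t^{k_l})` in `[0, ∞)` satisfy `t₁ · t₂ = 1`. -/
theorem stmt_4 (n : ℕ) (hn : 1 ≤ n) (k : Fin n → ℕ) (hk : ∀ l, 1 ≤ k l)
    (hnotDynkin : ¬ (n ≤ 2 ∨
      (n = 3 ∧
        ((∃ m : ℕ, 1 ≤ m ∧ Multiset.map k Finset.univ.val = {1, 1, m}) ∨
          Multiset.map k Finset.univ.val = {1, 2, 2} ∨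
          Multiset.map k Finset.univ.val = {1, 2, 3} ∨
          Multiset.map k Finset.univ.val = {1, 2, 4}))))
    (hnotExtDynkin : ¬ ((n = 4 ∧ ∀ l, k l = 1) ∨
      (n = 3 ∧
        (Multiset.map k Finset.univ.val = {2, 2, 2} ∨
          Multiset.map k Finset.univ.val = {1, 3, 3} ∨
          Multiset.map k Finset.univ.val = {1, 2, 5}))))
    (t₁ t₂ : ℝ) (ht₁ : 0 ≤ t₁) (ht₂ : 0 ≤ t₂) (h₁₂ : t₁ < t₂)
    (heq₁ : (n : ℝ) - 1 - t₁ = ∑ l : Fin n, 1 / ∑ i ∈ Finset.range (k l + 1), t₁ ^ i)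
    (heq₂ : (n : ℝ) - 1 - t₂ = ∑ l : Fin n, 1 / ∑ i ∈ Finset.range (k l + 1), t₂ ^ i) :
    t₁ * t₂ = 1 :=
  stmt_4_general n k hk hnotDynkin hnotExtDynkin t₁ t₂ ht₁ h₁₂ heq₁ heq₂
end
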